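/- arXiv:2212.06819 — 2 statements merged into one kernel-verified Lean document; each statement's English description precedes it below -/
import Mathlib

section
/- Let G be a finite connected graph with first Betti number b1. For every spanning tree T of G, the b1-th exterior power of the projection π_{T^c} of C_1(G,ℤ) onto the span of edges not in T, restricted to the top exterior power of the cycle group, satisfies: the sum over all spanning trees T of ⋀^{b1} π_{T^c} equals the identity on ⋀^{b1} Z_1(G,ℤ). -/
/-! Framework: a finite graph is given by a finite vertex type `V`, a finite linearly
ordered type `E` of (positively oriented) edges, and maps `head, tail : E → V`.
`C_1(G,ℤ)` is modeled as `E → ℤ`. -/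

section Graph

variable {V E : Type*} [Fintype V] [Fintype E] [DecidableEq V] [DecidableEq E]
  [LinearOrder E]

/-- The boundary operator `∂ : C₁(G,ℤ) → C₀(G,ℤ)`. -/
def bd (head tail : E → V) : (E → ℤ) →ₗ[ℤ] (V → ℤ) where
  toFun c := fun v => ∑ e, c e *
    ((if head e = v then 1 else 0) - (if tail e = v then 1 else 0))
  map_add' c d := by
    funext v
    simp [add_mul, Finset.sum_add_distrib]
  map_smul' r c := by
    funext v
    simp [Finset.mul_sum, mul_assoc]

/-- Two vertices are connected through the edges of `T`. -/
def Conn (head tail : E → V) (T : Finset E) (v w : V) : Prop :=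
  Relation.ReflTransGen
    (fun a b => ∃ e ∈ T, (head e = a ∧ tail e = b) ∨ (head e = b ∧ tail e = a)) v w

/-- `T` is a spanning tree. -/
def IsSpanningTree (head tail : E → V) (T : Finset E) : Prop :=
  T.card + 1 = Fintype.card V ∧ ∀ v w : V, Conn head tail T v w

/-- The coordinate projection `π_S : C₁(G,ℤ) → C₁(S,ℤ)` killing the edges outside
`S`. -/
def piProj (S : Finset E) (c : E → ℤ) : E → ℤ :=
  fun e => if e ∈ S then c e else 0

/-- The wedge `γ₁ ∧ … ∧ γₙ` of a family of chains, in the exterior algebra of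
`C₁(G,ℤ)`. -/
noncomputable def chainWedge {n : ℕ} (γ : Fin n → (E → ℤ)) :
    ExteriorAlgebra ℤ (E → ℤ) :=
  ((List.finRange n).map (fun i => ExteriorAlgebra.ι ℤ (γ i))).prod

end Graph

/-! Expanding in the standard basis of `ℤ^E` gives the Cauchy–Binet identity
`γ₁ ∧ ⋯ ∧ γ_b = ∑_{|S| = b} π_S γ₁ ∧ ⋯ ∧ π_S γ_b`. For `|S| = b` the complement `Sᶜ` has
`|V| - 1` edges, so it is either a spanning tree or disconnected. If it is disconnected, the
boundaries of chains on `Sᶜ` have zero sum over `V` and over a component, so they form a lattice of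
rank at most `|V| - 2` and `Sᶜ` carries a nonzero cycle. Then `π_S` kills a nonzero vector of the
cycle lattice, whose rank is at most `b` because `G` is connected, so the `π_S γᵢ` are linearly
dependent and their wedge vanishes in the torsion-free exterior algebra. -/

open Module Finset

section LinearAlgebra

instance AlternatingMap.instIsZeroApply {R M N ι : Type*} [Semiring R] [AddCommMonoid M]
    [Module R M] [AddCommMonoid N] [Module R N] : IsZeroApply (M [⋀^ι]→ₗ[R] N) (ι → M) N :=
  ⟨fun _ => rfl⟩

instance AlternatingMap.instIsAddApply {R M N ι : Type*} [Semiring R] [AddCommMonoid M]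
    [Module R M] [AddCommMonoid N] [Module R N] : IsAddApply (M [⋀^ι]→ₗ[R] N) (ι → M) N :=
  ⟨fun _ _ _ => rfl⟩

instance ExteriorAlgebra.instModuleFree {R M : Type*} [CommRing R] [AddCommGroup M] [Module R M]
    [Module.Free R M] : Module.Free R (ExteriorAlgebra R M) :=
  letI := IsWellOrder.linearOrder (WellOrderingRel (α := Module.Free.ChooseBasisIndex R M))
  .of_basis (Module.Free.chooseBasis R M).ExteriorAlgebra

variable {R M N : Type*} [CommRing R] [IsDomain R] [AddCommGroup M] [Module R M]
  [AddCommGroup N] [Module R N]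

theorem LinearMap.finrank_range_add_finrank_ker_of_isDomain [Module.Finite R M]
    (f : M →ₗ[R] N) : finrank R (range f) + finrank R (ker f) = finrank R M := by
  rw [← f.quotKerEquivRange.finrank_eq, Submodule.finrank_quotient_add_finrank]

theorem LinearMap.finrank_ker_add_of_surjective [Module.Finite R M] {f : M →ₗ[R] N}
    (hf : Function.Surjective f) : finrank R (ker f) + finrank R N = finrank R M := by
  rw [← f.finrank_range_add_finrank_ker_of_isDomain, range_eq_top.mpr hf, finrank_top, add_comm]

theorem LinearMap.finrank_range_lt_iff_ker_ne_bot [IsNoetherianRing R] [Module.Finite R M]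
    [IsTorsionFree R M] (f : M →ₗ[R] N) : finrank R (range f) < finrank R M ↔ ker f ≠ ⊥ := by
  rw [← Submodule.one_le_finrank_iff, ← f.finrank_range_add_finrank_ker_of_isDomain]
  omega

theorem LinearMap.not_linearIndependent_comp_of_ker_ne_bot [IsNoetherianRing R]
    [Module.Finite R M] [IsTorsionFree R M] (f : M →ₗ[R] N) {n : ℕ} (hM : finrank R M ≤ n)
    (hf : ker f ≠ ⊥) (v : Fin n → M) : ¬ LinearIndependent R (f ∘ v) := by
  intro hli
  have hrange : LinearIndependent R fun i => (⟨f (v i), mem_range_self f _⟩ : range f) :=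
    .of_comp (range f).subtype hli
  have := hrange.fintype_card_le_finrank
  have := f.finrank_range_lt_iff_ker_ne_bot.mpr hf
  simp only [Fintype.card_fin] at *
  omega

end LinearAlgebra

section Projection

theorem chainWedge_eq_ιMulti {E : Type*} {n : ℕ} (γ : Fin n → E → ℤ) :
    chainWedge γ = ExteriorAlgebra.ιMulti ℤ n γ := by
  rw [ExteriorAlgebra.ιMulti_apply, chainWedge, List.ofFn_eq_map]

variable {E : Type*} [DecidableEq E]

def piProjₗ (S : Finset E) : (E → ℤ) →ₗ[ℤ] (E → ℤ) where
  toFun := piProj S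
  map_add' c d := by ext e; simp only [piProj, Pi.add_apply]; split_ifs <;> simp
  map_smul' r c := by ext e; simp only [piProj, Pi.smul_apply]; split_ifs <;> simp

@[simp]
theorem piProjₗ_apply (S : Finset E) (c : E → ℤ) : piProjₗ S c = piProj S c := rfl

theorem piProj_basisFun [Finite E] (S : Finset E) (e : E) :
    piProj S (Pi.basisFun ℤ E e) = if e ∈ S then Pi.basisFun ℤ E e else 0 := by
  ext e'
  unfold piProj
  by_cases he' : e' = e <;> by_cases he : e ∈ S <;> simp_all

variable [Fintype E]

theorem sum_compLinearMap_piProjₗ (k : ℕ) :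
    ∑ S ∈ powersetCard k univ, (ExteriorAlgebra.ιMulti ℤ k).compLinearMap (piProjₗ S) =
      ExteriorAlgebra.ιMulti ℤ k (M := E → ℤ) := by
  refine (Pi.basisFun ℤ E).ext_alternating fun f hf => ?_
  have hcard : (univ.image f).card = k := by simp [card_image_of_injective _ hf]
  simp only [_root_.sum_apply, AlternatingMap.compLinearMap_apply, piProjₗ_apply,
    piProj_basisFun]
  rw [sum_eq_single (univ.image f)]
  · simp
  · intro S hS hne
    obtain ⟨i, hi⟩ : ∃ i, f i ∉ S := by
      by_contra! h
      exact hne (eq_of_subset_of_card_le (fun e he => by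
        obtain ⟨i, -, rfl⟩ := mem_image.mp he; exact h i) (by simp_all)).symm
    exact AlternatingMap.map_coord_zero _ i (by simp [hi])
  · simp [hcard]

theorem ιMulti_eq_sum_ιMulti_piProj {k : ℕ} (γ : Fin k → E → ℤ) :
    ExteriorAlgebra.ιMulti ℤ k γ =
      ∑ S ∈ powersetCard k univ, ExteriorAlgebra.ιMulti ℤ k (fun i => piProj S (γ i)) := by
  have := DFunLike.congr_fun (sum_compLinearMap_piProjₗ (E := E) k) γ
  rw [_root_.sum_apply] at this
  exact this.symm

end Projection

section GraphHomology

def vertexSum {V : Type*} (A : Finset V) : (V → ℤ) →ₗ[ℤ] ℤ := ∑ v ∈ A, LinearMap.proj v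

@[simp]
theorem vertexSum_apply {V : Type*} (A : Finset V) (x : V → ℤ) :
    vertexSum A x = ∑ v ∈ A, x v := by
  simp [vertexSum, LinearMap.sum_apply]

theorem vertexSum_single {V : Type*} [DecidableEq V] (A : Finset V) (v : V) :
    vertexSum A (Pi.single v 1) = if v ∈ A then 1 else 0 := by
  simp [Pi.single_apply]

variable {V E : Type*} [Fintype E] [DecidableEq V] (head tail : E → V)

theorem vertexSum_bd_eq_zero {A : Finset V} {c : E → ℤ}
    (hA : ∀ e, c e ≠ 0 → (head e ∈ A ↔ tail e ∈ A)) : vertexSum A (bd head tail c) = 0 := by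
  simp only [vertexSum_apply, bd, LinearMap.coe_mk, AddHom.coe_mk]
  rw [sum_comm]
  refine sum_eq_zero fun e _ => ?_
  rw [← mul_sum, sum_sub_distrib, sum_ite_eq, sum_ite_eq]
  by_cases he : c e = 0
  · simp [he]
  · simp [hA e he]

variable [DecidableEq E]

theorem bd_single (e : E) :
    bd head tail (Pi.single e 1) = Pi.single (head e) 1 - Pi.single (tail e) 1 := by
  ext v
  simp [bd, Pi.single_apply, eq_comm]

theorem single_sub_single_mem_range_bd {F : Finset E} {v w : V} (h : Conn head tail F v w) :
    Pi.single w 1 - Pi.single v 1 ∈ LinearMap.range (bd head tail) := by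
  induction h with
  | refl => simp
  | @tail u w _ huw ih =>
    obtain ⟨e, -, ⟨rfl, rfl⟩ | ⟨rfl, rfl⟩⟩ := huw
    · convert Submodule.sub_mem _ ih ⟨Pi.single e 1, bd_single head tail e⟩ using 1
      abel
    · convert Submodule.add_mem _ ih ⟨Pi.single e 1, bd_single head tail e⟩ using 1
      abel

def chainsOn (T : Finset E) : Submodule ℤ (E → ℤ) := LinearMap.ker (piProjₗ Tᶜ)

theorem mem_chainsOn {T : Finset E} {c : E → ℤ} : c ∈ chainsOn T ↔ piProj Tᶜ c = 0 :=
  LinearMap.mem_ker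

theorem card_le_finrank_chainsOn (T : Finset E) : T.card ≤ finrank ℤ (chainsOn T) := by
  have hmem (e : ↥T) : Pi.basisFun ℤ E e ∈ chainsOn T := by
    rw [mem_chainsOn, piProj_basisFun, if_neg (notMem_compl.mpr e.2)]
  have hli : LinearIndependent ℤ fun e : ↥T => (⟨_, hmem e⟩ : chainsOn T) :=
    .of_comp (chainsOn T).subtype
      ((Pi.basisFun ℤ E).linearIndependent.comp _ Subtype.val_injective)
  simpa only [Fintype.card_coe] using hli.fintype_card_le_finrank

variable [Fintype V]

theorem ker_vertexSum_univ_le_range_bd (hconn : ∀ v w : V, Conn head tail univ v w) :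
    LinearMap.ker (vertexSum univ) ≤ LinearMap.range (bd head tail) := by
  rcases isEmpty_or_nonempty V with hV | ⟨⟨v₀⟩⟩
  · intro x _
    simp [Subsingleton.elim x 0]
  intro x hx
  have hx : x = ∑ v, x v • (Pi.single v 1 - Pi.single v₀ 1 : V → ℤ) := by
    rw [LinearMap.mem_ker, vertexSum_apply] at hx
    simp only [smul_sub, sum_sub_distrib, ← sum_smul, hx, zero_smul, sub_zero]
    simp [← Pi.single_smul, Finset.univ_sum_single]
  rw [hx]
  exact Submodule.sum_mem _ fun v _ =>
    Submodule.smul_mem _ _ (single_sub_single_mem_range_bd head tail (hconn v₀ v))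

theorem finrank_ker_bd_add_card_le (hconn : ∀ v w : V, Conn head tail univ v w) :
    finrank ℤ (LinearMap.ker (bd head tail)) + Fintype.card V ≤ Fintype.card E + 1 := by
  have hbd := (bd head tail).finrank_range_add_finrank_ker_of_isDomain
  have hle := Submodule.finrank_mono (ker_vertexSum_univ_le_range_bd head tail hconn)
  rw [finrank_fintype_fun_eq_card] at hbd
  rcases isEmpty_or_nonempty V with hV | ⟨⟨v₀⟩⟩
  · simp only [Fintype.card_eq_zero]
    omega
  have hσ : Function.Surjective (vertexSum (univ : Finset V)) := fun t =>
    ⟨t • Pi.single v₀ 1, by rw [map_smul, vertexSum_single]; simp⟩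
  have := LinearMap.finrank_ker_add_of_surjective hσ
  rw [finrank_self, finrank_fintype_fun_eq_card] at this
  omega

theorem finrank_map_bd_chainsOn_add_two_le {T : Finset E}
    (hnc : ¬ ∀ v w : V, Conn head tail T v w) :
    finrank ℤ ((chainsOn T).map (bd head tail)) + 2 ≤ Fintype.card V := by
  classical
  push Not at hnc
  obtain ⟨v₀, w₀, hvw⟩ := hnc
  set A := univ.filter (Conn head tail T v₀)
  have hA (e) (he : e ∈ T) : head e ∈ A ↔ tail e ∈ A := by
    simp only [A, mem_filter, mem_univ, true_and]
    exact ⟨fun h => h.tail ⟨e, he, .inl ⟨rfl, rfl⟩⟩, fun h => h.tail ⟨e, he, .inr ⟨rfl, rfl⟩⟩⟩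
  set ψ := (vertexSum A).prod (vertexSum univ)
  have hψ : Function.Surjective ψ := fun ⟨a, b⟩ =>
    ⟨a • Pi.single v₀ 1 + (b - a) • Pi.single w₀ 1, by
      have hv₀ : v₀ ∈ A := mem_filter.mpr ⟨mem_univ _, .refl⟩
      have hw₀ : w₀ ∉ A := by simpa [A] using hvw
      simp only [ψ, map_add, map_smul, LinearMap.prod_apply, Function.prod_apply,
        vertexSum_single, if_pos hv₀, if_neg hw₀, if_pos (mem_univ _), Prod.smul_mk,
        Prod.mk_add_mk, smul_eq_mul]
      ext <;> ring⟩
  have hmap : (chainsOn T).map (bd head tail) ≤ LinearMap.ker ψ := by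
    rintro _ ⟨c, hc, rfl⟩
    have hsupp (e) (he : c e ≠ 0) : e ∈ T := by
      by_contra heT
      simpa [piProj, heT, he] using congrFun (mem_chainsOn.mp hc) e
    exact Prod.ext (vertexSum_bd_eq_zero head tail fun e he => hA e (hsupp e he))
      (vertexSum_bd_eq_zero head tail fun e _ => by simp)
  have := LinearMap.finrank_ker_add_of_surjective hψ
  rw [finrank_prod, finrank_self, finrank_fintype_fun_eq_card] at this
  have := Submodule.finrank_mono hmap
  omega

theorem ker_bd_inf_chainsOn_ne_bot {T : Finset E}
    (hT : T.card + 1 = Fintype.card V) (hnc : ¬ ∀ v w : V, Conn head tail T v w) :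
    LinearMap.ker (bd head tail) ⊓ chainsOn T ≠ ⊥ := by
  have hC := card_le_finrank_chainsOn T
  have hB := finrank_map_bd_chainsOn_add_two_le head tail hnc
  have hker := ((bd head tail).domRestrict (chainsOn T)).finrank_range_lt_iff_ker_ne_bot.mp
    (by rw [LinearMap.range_domRestrict]; omega)
  obtain ⟨⟨z, hzT⟩, hzbd, hz⟩ := (Submodule.ne_bot_iff _).mp hker
  exact (Submodule.ne_bot_iff _).mpr
    ⟨z, ⟨LinearMap.mem_ker.mpr hzbd, hzT⟩, fun h => hz (Subtype.ext h)⟩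

theorem ιMulti_piProj_compl_eq_zero_of_not_conn
    (hconn : ∀ v w : V, Conn head tail univ v w) {b₁ : ℕ}
    (hb₁ : b₁ + Fintype.card V = Fintype.card E + 1) {γ : Fin b₁ → E → ℤ}
    (hγ : ∀ i, bd head tail (γ i) = 0) {T : Finset E} (hT : T.card + 1 = Fintype.card V)
    (hnc : ¬ ∀ v w : V, Conn head tail T v w) :
    ExteriorAlgebra.ιMulti ℤ b₁ (fun i => piProj Tᶜ (γ i)) = 0 := by
  obtain ⟨z, ⟨hz, hzT⟩, hz0⟩ :=
    (Submodule.ne_bot_iff _).mp (ker_bd_inf_chainsOn_ne_bot head tail hT hnc)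
  set f := piProjₗ Tᶜ ∘ₗ (LinearMap.ker (bd head tail)).subtype
  have hf : LinearMap.ker f ≠ ⊥ :=
    (Submodule.ne_bot_iff _).mpr ⟨⟨z, hz⟩, hzT, fun h => hz0 (congrArg Subtype.val h)⟩
  have hZ := finrank_ker_bd_add_card_le head tail hconn
  exact (ExteriorAlgebra.ιMulti ℤ b₁).map_linearDependent _
    (f.not_linearIndependent_comp_of_ker_ne_bot (by omega) hf fun i => ⟨γ i, hγ i⟩)

end GraphHomology

open Classical

theorem sum_exterior_projections_eq_id_general
    {V E : Type*} [Fintype V] [Fintype E] [DecidableEq V] [DecidableEq E]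
    (head tail : E → V)
    (hconn : ∀ v w : V, Conn head tail (Finset.univ : Finset E) v w)
    (b₁ : ℕ) (hb₁ : b₁ + Fintype.card V = Fintype.card E + 1)
    (γ : Fin b₁ → (E → ℤ)) (hγ : ∀ i, bd head tail (γ i) = 0) :
    (∑ T : Finset E,
        if IsSpanningTree head tail T then
          chainWedge (fun i => piProj (Tᶜ) (γ i)) else 0) =
      chainWedge γ := by
  have hterm (T : Finset E) : (if IsSpanningTree head tail T then
      chainWedge (fun i => piProj Tᶜ (γ i)) else 0) =
      if Tᶜ.card = b₁ then ExteriorAlgebra.ιMulti ℤ b₁ (fun i => piProj Tᶜ (γ i)) else 0 := by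
    have hcard := card_add_card_compl T
    by_cases hT : IsSpanningTree head tail T
    · rw [if_pos hT, if_pos (by have := hT.1; omega), chainWedge_eq_ιMulti]
    · rw [if_neg hT]
      split_ifs with hc
      · exact (ιMulti_piProj_compl_eq_zero_of_not_conn head tail hconn hb₁ hγ (by omega)
          fun h => hT ⟨by omega, h⟩).symm
      · rfl
  rw [sum_congr rfl fun T _ => hterm T, chainWedge_eq_ιMulti, ιMulti_eq_sum_ιMulti_piProj,
    powersetCard_eq_filter, powerset_univ, sum_filter]
  exact Fintype.sum_equiv (compl_involutive.toPerm _) _ _ fun _ => rfl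

/-- **The sum over spanning trees of the top exterior powers of the projections
`π_{T^c}` is the identity on `⋀^{b₁} Z₁(G,ℤ)`.**  Equivalently (on the generating
wedges of cycles): for every family `γ₁,…,γ_{b₁}` of cycles,
`Σ_{T spanning tree} π_{T^c}(γ₁) ∧ … ∧ π_{T^c}(γ_{b₁}) = γ₁ ∧ … ∧ γ_{b₁}`. -/
theorem sum_exterior_projections_eq_id
    {V E : Type*} [Fintype V] [Fintype E] [DecidableEq V] [DecidableEq E]
    [LinearOrder E] (head tail : E → V)
    (hconn : ∀ v w : V, Conn head tail (Finset.univ : Finset E) v w)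
    (b₁ : ℕ) (hb₁ : b₁ + Fintype.card V = Fintype.card E + 1)
    (γ : Fin b₁ → (E → ℤ)) (hγ : ∀ i, bd head tail (γ i) = 0) :
    (∑ T : Finset E,
        if IsSpanningTree head tail T then
          chainWedge (fun i => piProj (Tᶜ) (γ i)) else 0) =
      chainWedge γ :=
  sum_exterior_projections_eq_id_general head tail hconn b₁ hb₁ γ hγ
end

section
/- Let G be a finite connected graph, and let (κ_1,…,κ_{|V|−1}) be an integral basis of the cut group B^1(G,ℤ) ⊂ C^1(G,ℤ). Then in the (|V|−1)-th exterior power of C^1(G,ℤ), κ_1 ∧ … ∧ κ_{|V|−1} = Σ_{T spanning tree} ε_T · e*_T, where e*_T is the wedge of the dual basis vectors of the edges of T (in a fixed order) and ε_T ∈ {−1,+1}. -/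
/-! Framework: a finite graph with vertex type `V`, linearly ordered edge type `E`
(positively oriented edges), and maps `head, tail : E → V`.  The cochain group
`C^1(G,ℤ)` is modeled as `E → ℤ` (coordinates in the dual canonical basis `e*`). -/

section Graph

variable {V E : Type*} [Fintype V] [Fintype E] [DecidableEq V] [DecidableEq E]
  [LinearOrder E]

/-- The coboundary operator `δ : C⁰(G,ℤ) → C¹(G,ℤ)`, `(δ f)(e) = f(head e) − f(tail e)`;
its image is the cut group `B¹(G,ℤ)`. -/
def cobd (head tail : E → V) : (V → ℤ) →ₗ[ℤ] (E → ℤ) where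
  toFun f := fun e => f (head e) - f (tail e)
  map_add' f g := by funext e; simp; ring
  map_smul' r f := by funext e; simp [mul_sub]

/-- The wedge `e*_S` of the dual basis vectors of the edges of `S`, taken in the fixed
linear order on `E`, in the exterior algebra of `C¹(G,ℤ)`. -/
noncomputable def eStarWedge (S : Finset E) : ExteriorAlgebra ℤ (E → ℤ) :=
  ((S.sort (· ≤ ·)).map (fun e => ExteriorAlgebra.ι ℤ (Pi.single e (1 : ℤ)))).prod

/-- The wedge `κ₁ ∧ … ∧ κₙ` of a family of cochains. -/
noncomputable def cochainWedge {n : ℕ} (κ : Fin n → (E → ℤ)) :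
    ExteriorAlgebra ℤ (E → ℤ) :=
  ((List.finRange n).map (fun i => ExteriorAlgebra.ι ℤ (κ i))).prod

/-- The change-of-basis determinant `det(ℬ/ℬ_T)` between a cut basis `κ` and the
fundamental cut basis of a spanning tree `T`: since `κ(T,e)` is the unique fundamental
cut with a (unit) coordinate on `e ∈ T`, this is the determinant of the matrix of
coordinates of the `κᵢ` on the edges of `T` (in the fixed order). -/
noncomputable def cutCbDet {n : ℕ} (κ : Fin n → (E → ℤ)) (T : Finset E) : ℤ :=
  if h : (T.sort (· ≤ ·)).length = n then
    Matrix.det (Matrix.of fun i j : Fin n =>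
      κ j ((T.sort (· ≤ ·)).get (Fin.cast h.symm i)))
  else 0

end Graph

/-! Expanding `κ₁ ∧ ⋯ ∧ κₙ` in the basis `(e*_S)_{|S| = n}` of `⋀ⁿ C¹(G,ℤ)` gives as coefficients
the `n × n` minors of the coordinate matrix of `κ`. If `|S| = |V| - 1` but `S` is not a spanning
tree, then `S` does not connect `G`, and the coboundary of the indicator of an `S`-component is a
nonzero cut vanishing on `S`; it is an integer combination of the `κᵢ`, so the minor on `S` has a
nontrivial kernel and vanishes. If `T` is a spanning tree, the fundamental cuts `κ(T,e)` lie in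
the span of the `κᵢ` and restrict on `T` to the standard basis of `ℤ^T`, so the minor on `T` has
an integral inverse and is `±1`. -/

namespace ExteriorAlgebra

open Set.powersetCard

theorem ιMulti_eq_sum_det_smul_ιMulti_family {R M I : Type*} [CommRing R] [AddCommGroup M]
    [Module R M] [LinearOrder I] [Fintype I] (b : Module.Basis I R M) {n : ℕ} (v : Fin n → M) :
    ιMulti R n v = ∑ s : Set.powersetCard I n,
      (Matrix.of fun i j => b.coord (ofFinEmbEquiv.symm s j) (v i)).det •
        ιMulti_family R n b s := by
  have := congrArg Subtype.val ((b.exteriorPower n).sum_repr (exteriorPower.ιMulti R n v))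
  simpa [exteriorPower.basis_repr_apply, exteriorPower.basis_apply] using this.symm

end ExteriorAlgebra

section Minor

open Matrix

variable {R ι : Type*} [CommRing R] {n : ℕ} {κ : Fin n → ι → R} {g : ι → R}

theorem exists_mulVec_eq_comp_of_mem_span_range (hg : g ∈ Submodule.span R (Set.range κ))
    (s : Fin n → ι) :
    ∃ c : Fin n → R, ∑ j, c j • κ j = g ∧ (Matrix.of fun i j => κ j (s i)) *ᵥ c = g ∘ s := by
  obtain ⟨c, rfl⟩ := (Submodule.mem_span_range_iff_exists_fun R).mp hg
  refine ⟨c, rfl, funext fun i => ?_⟩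
  simp [mulVec, dotProduct, Finset.sum_apply, mul_comm]

theorem det_eq_zero_of_mem_span_of_comp_eq_zero [IsDomain R]
    (hg : g ∈ Submodule.span R (Set.range κ)) (hg0 : g ≠ 0) {s : Fin n → ι} (hgs : g ∘ s = 0) :
    (Matrix.of fun i j => κ j (s i)).det = 0 := by
  obtain ⟨c, rfl, hc⟩ := exists_mulVec_eq_comp_of_mem_span_range hg s
  by_contra hdet
  rw [eq_zero_of_mulVec_eq_zero hdet (hc.trans hgs)] at hg0
  simp at hg0

theorem isUnit_det_of_forall_exists_mem_span {s : Fin n → ι}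
    (h : ∀ i, ∃ g ∈ Submodule.span R (Set.range κ), g ∘ s = Pi.single i 1) :
    IsUnit (Matrix.of fun i j => κ j (s i)).det := by
  choose g hg hgs using h
  choose c _ hc using fun i => exists_mulVec_eq_comp_of_mem_span_range (hg i) s
  refine isUnit_det_of_right_inverse (B := Matrix.of fun j i => c i j) ?_
  ext i' i
  simpa [mul_apply, mulVec, dotProduct, one_apply, Pi.single_apply, eq_comm]
    using congrFun ((hc i).trans (hgs i)) i'

end Minor

namespace Conn

variable {V E : Type*} {head tail : E → V} {S T : Finset E} {u v w : V}

@[simp]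
theorem refl : Conn head tail S v v := Relation.ReflTransGen.refl

theorem symm (h : Conn head tail S v w) : Conn head tail S w v :=
  Relation.ReflTransGen.mono (fun _ _ ⟨e, he, h⟩ => ⟨e, he, h.symm⟩) _ _
    (Relation.ReflTransGen.swap _ _ h)

theorem trans (h : Conn head tail S u v) (h' : Conn head tail S v w) : Conn head tail S u w :=
  Relation.ReflTransGen.trans h h'

theorem of_mem {e : E} (he : e ∈ S) : Conn head tail S (head e) (tail e) :=
  .single ⟨e, he, .inl ⟨rfl, rfl⟩⟩

theorem iff_of_mem {e : E} (he : e ∈ S) :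
    Conn head tail S v (head e) ↔ Conn head tail S v (tail e) :=
  ⟨fun h => h.trans (of_mem he), fun h => h.trans (of_mem he).symm⟩

theorem eq_of_forall_mem {α : Type*} {f : V → α} (hf : ∀ e ∈ S, f (head e) = f (tail e))
    (h : Conn head tail S v w) : f v = f w := by
  induction h with
  | refl => rfl
  | tail _ hstep ih =>
    obtain ⟨e, he, ⟨rfl, rfl⟩ | ⟨rfl, rfl⟩⟩ := hstep
    exacts [ih.trans (hf e he), ih.trans (hf e he).symm]

theorem mono_of_forall_mem (hST : ∀ e ∈ S, Conn head tail T (head e) (tail e))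
    (h : Conn head tail S v w) : Conn head tail T v w :=
  eq_of_forall_mem (f := Conn head tail T v)
    (fun e he => propext ⟨fun h => h.trans (hST e he), fun h => h.trans (hST e he).symm⟩) h ▸ refl

end Conn

section SpanningTree

variable {V E : Type*} [Fintype V] {head tail : E → V}

/-- If `S` connects `V`, then `f ↦ (δf|_S, f v₀)` is injective on `ℤ^V`. -/
theorem card_le_card_add_one_of_forall_conn {S : Finset E}
    (hS : ∀ v w, Conn head tail S v w) : Fintype.card V ≤ S.card + 1 := by
  rcases isEmpty_or_nonempty V with hV | ⟨⟨v₀⟩⟩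
  · simp
  let L : (V → ℤ) →ₗ[ℤ] (S → ℤ) × ℤ :=
    (LinearMap.pi fun e : S => LinearMap.proj e.1 ∘ₗ cobd head tail).prod (LinearMap.proj v₀)
  have hL : Function.Injective L := by
    rw [← LinearMap.ker_eq_bot, LinearMap.ker_eq_bot']
    intro f hf
    funext v
    have hconst := Conn.eq_of_forall_mem (f := f) (fun e he => ?_) (hS v₀ v)
    · simpa [L, ← hconst] using congrArg Prod.snd hf
    · simpa [L, cobd, sub_eq_zero] using congrFun (congrArg Prod.fst hf) ⟨e, he⟩
  simpa using LinearMap.finrank_le_finrank_of_injective hL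

theorem IsSpanningTree.not_conn_erase [DecidableEq E] {T : Finset E}
    (hT : IsSpanningTree head tail T) {e : E} (he : e ∈ T) :
    ¬ Conn head tail (T.erase e) (head e) (tail e) := by
  intro hcon
  have hconn : ∀ v w, Conn head tail (T.erase e) v w := fun v w =>
    Conn.mono_of_forall_mem (fun e' he' => by
      by_cases h : e' = e
      · exact h ▸ hcon
      · exact Conn.of_mem (Finset.mem_erase.mpr ⟨h, he'⟩)) (hT.2 v w)
  have := card_le_card_add_one_of_forall_conn hconn
  have := Finset.card_erase_add_one he
  have := hT.1
  omega

end SpanningTree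

section ComponentCut

variable {V E : Type*} {head tail : E → V}

/-- For `S = T ∖ e` and `v = head e` this is the fundamental cut `κ(T, e)`. -/
noncomputable def componentCut (head tail : E → V) (S : Finset E) (v : V) : E → ℤ :=
  cobd head tail ({w | Conn head tail S v w}.indicator 1)

theorem componentCut_apply_of_mem {S : Finset E} (v : V) {e : E} (he : e ∈ S) :
    componentCut head tail S v e = 0 :=
  sub_eq_zero.mpr (Set.indicator_eq_indicator (Conn.iff_of_mem he) rfl)

theorem componentCut_ne_zero [Fintype E]
    (hconn : ∀ v w : V, Conn head tail (Finset.univ : Finset E) v w)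
    {S : Finset E} {v w : V} (hvw : ¬ Conn head tail S v w) : componentCut head tail S v ≠ 0 := by
  intro h0
  have := Conn.eq_of_forall_mem (f := {w | Conn head tail S v w}.indicator (1 : V → ℤ))
    (fun e _ => sub_eq_zero.mp (congrFun h0 e)) (hconn v w)
  simp [hvw] at this

theorem IsSpanningTree.componentCut_erase_apply_self [Fintype V] [DecidableEq E]
    {T : Finset E} (hT : IsSpanningTree head tail T) {e : E} (he : e ∈ T) :
    componentCut head tail (T.erase e) (head e) e = 1 := by
  simp [componentCut, cobd, hT.not_conn_erase he]

end ComponentCut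

section CutBasis

variable {V E : Type*} {n : ℕ}

theorem cochainWedge_eq_ιMulti (κ : Fin n → E → ℤ) :
    cochainWedge κ = ExteriorAlgebra.ιMulti ℤ n κ := by
  rw [ExteriorAlgebra.ιMulti_apply, cochainWedge, List.ofFn_eq_map]

variable [LinearOrder E]

theorem cutCbDet_eq_det (κ : Fin n → E → ℤ) {S : Finset E} (h : S.card = n) :
    cutCbDet κ S = (Matrix.of fun i j => κ j (S.orderEmbOfFin h i)).det := by
  rw [cutCbDet, dif_pos (by simp [h])]
  simp [Finset.orderEmbOfFin_apply]

theorem eStarWedge_eq_ιMulti [DecidableEq E] {S : Finset E} (h : S.card = n) :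
    eStarWedge S = ExteriorAlgebra.ιMulti ℤ n (fun i => Pi.single (S.orderEmbOfFin h i) 1) := by
  rw [ExteriorAlgebra.ιMulti_apply, eStarWedge, ← Finset.listMap_orderEmbOfFin_finRange S h,
    List.map_map, List.ofFn_eq_map]
  rfl

theorem cochainWedge_eq_sum_cutCbDet_smul_eStarWedge [Fintype E] [DecidableEq E]
    (κ : Fin n → E → ℤ) :
    cochainWedge κ = ∑ S : Finset E, if S.card = n then cutCbDet κ S • eStarWedge S else 0 := by
  rw [← Finset.sum_filter, Finset.sum_subtype (p := (· ∈ Set.powersetCard E n)) _ (by simp),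
    cochainWedge_eq_ιMulti,
    ExteriorAlgebra.ιMulti_eq_sum_det_smul_ιMulti_family (Pi.basisFun ℤ E)]
  refine Finset.sum_congr rfl fun S _ => ?_
  rw [cutCbDet_eq_det κ S.2, eStarWedge_eq_ιMulti S.2, ← Matrix.det_transpose]
  congr 1
  unfold ExteriorAlgebra.ιMulti_family
  congr 1
  ext i e
  simp [Set.powersetCard.ofFinEmbEquiv_symm_apply]

variable {head tail : E → V} {κ : Fin n → E → ℤ}

theorem cutCbDet_eq_zero_of_not_conn [Fintype E]
    (hconn : ∀ v w : V, Conn head tail (Finset.univ : Finset E) v w)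
    (hκ : LinearMap.range (cobd head tail) ≤ Submodule.span ℤ (Set.range κ))
    {S : Finset E} (hS : S.card = n) {v w : V} (hvw : ¬ Conn head tail S v w) :
    cutCbDet κ S = 0 := by
  rw [cutCbDet_eq_det κ hS]
  exact det_eq_zero_of_mem_span_of_comp_eq_zero (hκ ⟨_, rfl⟩) (componentCut_ne_zero hconn hvw)
    (funext fun i => componentCut_apply_of_mem v (S.orderEmbOfFin_mem hS i))

theorem IsSpanningTree.isUnit_cutCbDet [Fintype V]
    (hκ : LinearMap.range (cobd head tail) ≤ Submodule.span ℤ (Set.range κ))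
    {T : Finset E} (hT : IsSpanningTree head tail T) (hTn : T.card = n) :
    IsUnit (cutCbDet κ T) := by
  rw [cutCbDet_eq_det κ hTn]
  set s := T.orderEmbOfFin hTn
  refine isUnit_det_of_forall_exists_mem_span fun i =>
    ⟨componentCut head tail (T.erase (s i)) (head (s i)), hκ ⟨_, rfl⟩, funext fun i' => ?_⟩
  rcases eq_or_ne i' i with rfl | hi
  · rw [Function.comp_apply, Pi.single_eq_same]
    exact hT.componentCut_erase_apply_self (T.orderEmbOfFin_mem hTn i')
  · rw [Function.comp_apply, Pi.single_eq_of_ne hi]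
    exact componentCut_apply_of_mem _
      (Finset.mem_erase.mpr ⟨s.injective.ne hi, T.orderEmbOfFin_mem hTn i'⟩)

end CutBasis

open Classical

theorem kirchhoff_cut_tree_identity_general
    {V E : Type*} [Fintype V] [Fintype E] [DecidableEq E]
    [LinearOrder E] (head tail : E → V)
    (hconn : ∀ v w : V, Conn head tail (Finset.univ : Finset E) v w)
    (n : ℕ) (hn : n + 1 = Fintype.card V)
    (κ : Fin n → (E → ℤ))
    (hκ_span : Submodule.span ℤ (Set.range κ) = LinearMap.range (cobd head tail)) :
    (∀ T : Finset E, IsSpanningTree head tail T →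
        cutCbDet κ T = 1 ∨ cutCbDet κ T = -1) ∧
    cochainWedge κ =
      ∑ T : Finset E,
        if IsSpanningTree head tail T then cutCbDet κ T • eStarWedge T else 0 := by
  have hcard : ∀ T, IsSpanningTree head tail T → T.card = n := fun T hT => by
    have := hT.1
    omega
  refine ⟨fun T hT => Int.isUnit_iff.mp (hT.isUnit_cutCbDet hκ_span.ge (hcard T hT)), ?_⟩
  rw [cochainWedge_eq_sum_cutCbDet_smul_eStarWedge]
  refine Finset.sum_congr rfl fun S _ => ?_
  by_cases hS : IsSpanningTree head tail S
  · simp [hS, hcard S hS]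
  by_cases hSn : S.card = n
  · obtain ⟨v, w, hvw⟩ : ∃ v w, ¬ Conn head tail S v w := by
      by_contra! h
      exact hS ⟨by omega, h⟩
    simp [hS, cutCbDet_eq_zero_of_not_conn hconn hκ_span.ge hSn hvw]
  · simp [hS, hSn]

/-- **The Kirchhoff cut–tree identity.**  Let `G` be a finite connected graph and
`(κ₁,…,κ_{|V|−1})` an integral basis of the cut group `B¹(G,ℤ) = im δ`.  Then each
change-of-basis determinant `ε_T` is `±1` and, in the `(|V|−1)`-st exterior power of
`C¹(G,ℤ)`, `κ₁ ∧ … ∧ κ_{|V|−1} = Σ_{T spanning tree} ε_T • e*_T`. -/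
theorem kirchhoff_cut_tree_identity
    {V E : Type*} [Fintype V] [Fintype E] [DecidableEq V] [DecidableEq E]
    [LinearOrder E] (head tail : E → V)
    (hconn : ∀ v w : V, Conn head tail (Finset.univ : Finset E) v w)
    (n : ℕ) (hn : n + 1 = Fintype.card V)
    (κ : Fin n → (E → ℤ))
    (hκ_indep : LinearIndependent ℤ κ)
    (hκ_span : Submodule.span ℤ (Set.range κ) = LinearMap.range (cobd head tail)) :
    (∀ T : Finset E, IsSpanningTree head tail T →
        cutCbDet κ T = 1 ∨ cutCbDet κ T = -1) ∧
    cochainWedge κ =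
      ∑ T : Finset E,
        if IsSpanningTree head tail T then cutCbDet κ T • eStarWedge T else 0 :=
  kirchhoff_cut_tree_identity_general head tail hconn n hn κ hκ_span
end
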